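/- In the RSG of Example 2 (14052 agents, 2001 resources: one resource x with quota 53, 1000 identical resources of quota 8, 1000 identical resources of quota 7, all of type 1, with beta values β_x > β_y > β_z > f_x(q_x − 2)), every Nash equilibrium allocation a that is stable for the grand coalition N must have x ∈ L(a), i.e., resource x is assigned exactly q_x − 1 = 52 agents. -/

import Mathlib

/-!
The quotas sum to `15053 > 14052`, and the numbers `q i - 1` to `13052 < 14052`; with strict
monotonicity this forces every Nash load into `{q i - 1, q i}`. If `x` carried `53` agents, the
shortfall `15053 - 14052 = 1001`, at most one per resource, would be spread over the `1000` `y`'s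
and the `1000` `z`'s, so some `y` carries `7` agents and some `z` carries `6`. The grand coalition
then sends `8` agents of `x` to that `y`, `7` to that `z`, and the former occupants of `y` and `z`
to `x`: the movers still pay `α`, the agents left at `x` pay `f_x(51) ≤ α`, and the former
occupants of `y` and `z` pay `f_x(51) < β_z < β_y`, contradicting stability.
-/

variable {N M : Type*}

/-- Number of agents assigned to resource `i` at allocation `a`. -/
def load [Fintype N] [DecidableEq M] (a : N → M) (i : M) : ℕ :=
  (Finset.univ.filter (fun j => a j = i)).card

/-- The cost incurred by agent `j` at allocation `a` for cost profile `f`. -/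
def cost [Fintype N] [DecidableEq M] (f : M → ℕ → ℕ) (a : N → M) (j : N) : ℕ :=
  f (a j) (load a (a j))

/-- The maximum cost over resources at allocation `a`. -/
def maxcost [Fintype N] [Fintype M] [DecidableEq M] (f : M → ℕ → ℕ) (a : N → M) : ℕ :=
  Finset.univ.sup (fun i => f i (load a i))

/-- The minmaxcost `α` of the RSG: minimum over allocations of the maxcost. -/
noncomputable def minmax (N : Type*) [Fintype N] [Fintype M] [DecidableEq M] (f : M → ℕ → ℕ) : ℕ :=
  sInf (Set.range (maxcost (N := N) f))

/-- The quota of resource `i`: the largest `t` with `f i t ≤ α`. -/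
noncomputable def quota (f : M → ℕ → ℕ) (α : ℕ) (i : M) : ℕ :=
  sSup {t | f i t ≤ α}

/-- `a` is a Nash equilibrium: no single agent can strictly decrease its cost
by switching to another resource. -/
def Nash [Fintype N] [DecidableEq M] (f : M → ℕ → ℕ) (a : N → M) : Prop :=
  ∀ j : N, ∀ i : M, i ≠ a j → cost f a j ≤ f i (load a i + 1)

/-- `a` is `c`-stable: coalition `c` has no deviation making every member weakly
better off and some member strictly better off. -/
def cStable [Fintype N] [DecidableEq N] [DecidableEq M]
    (f : M → ℕ → ℕ) (a : N → M) (c : Finset N) : Prop :=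
  ¬ ∃ b : N → M, (∀ j ∉ c, b j = a j) ∧
      (∀ j ∈ c, cost f b j ≤ cost f a j) ∧ (∃ j ∈ c, cost f b j < cost f a j)


open Finset

section Load

variable [Fintype N] [DecidableEq M]

lemma exists_eq_of_load_pos {a : N → M} {i : M} (h : 0 < load a i) : ∃ j, a j = i := by
  obtain ⟨j, hj⟩ := card_pos.mp h
  exact ⟨j, (mem_filter.mp hj).2⟩

lemma card_filter_mem_eq_sum_load (a : N → M) (s : Finset M) :
    #{j | a j ∈ s} = ∑ i ∈ s, load a i := by
  rw [card_eq_sum_card_fiberwise (s := {j | a j ∈ s}) (t := s) (f := a)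
    fun j hj => by simpa using hj]
  refine sum_congr rfl fun i hi => ?_
  rw [filter_filter, load]
  congr 1
  exact filter_congr fun j _ => and_iff_right_of_imp fun h => h ▸ hi

lemma sum_load [Fintype M] (a : N → M) : ∑ i, load a i = Fintype.card N := by
  rw [← card_filter_mem_eq_sum_load, filter_true_of_mem fun j _ => mem_univ (a j), card_univ]

lemma exists_load_lt_of_card_lt [Fintype M] {a : N → M} {g : M → ℕ}
    (h : Fintype.card N < ∑ i, g i) : ∃ i, load a i < g i := by
  obtain ⟨i, -, hi⟩ := exists_lt_of_sum_lt (sum_load a ▸ h)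
  exact ⟨i, hi⟩

lemma exists_lt_load_of_lt_card [Fintype M] {a : N → M} {g : M → ℕ}
    (h : ∑ i, g i < Fintype.card N) : ∃ i, g i < load a i := by
  obtain ⟨i, -, hi⟩ := exists_lt_of_sum_lt (sum_load a ▸ h)
  exact ⟨i, hi⟩

end Load

namespace Nash

variable [Fintype N] [Fintype M] [DecidableEq M] {f : M → ℕ → ℕ} {a : N → M} {q : M → ℕ} {α : ℕ}

theorem load_le (hN : Nash f a) (hmono : ∀ i, StrictMono (f i)) (hq : ∀ i, f i (q i) = α)
    (hcard : Fintype.card N < ∑ i, q i) (i : M) : load a i ≤ q i := by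
  by_contra! hi
  obtain ⟨i', hi'⟩ := exists_load_lt_of_card_lt (a := a) hcard
  obtain ⟨j, rfl⟩ := exists_eq_of_load_pos (a := a) (i := i) (by omega)
  have hne : i' ≠ a j := by rintro rfl; omega
  refine absurd (hN j i' hne) (not_le.mpr ?_)
  calc f i' (load a i' + 1) ≤ f i' (q i') := (hmono i').monotone hi'
    _ = f (a j) (q (a j)) := by rw [hq, hq]
    _ < cost f a j := hmono _ hi

theorem le_load_add_one (hN : Nash f a) (hmono : ∀ i, StrictMono (f i))
    (hq : ∀ i, f i (q i) = α) (hcard : ∑ i, (q i - 1) < Fintype.card N) (i : M) :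
    q i ≤ load a i + 1 := by
  by_contra! hi
  obtain ⟨i', hi'⟩ := exists_lt_load_of_lt_card (a := a) hcard
  obtain ⟨j, rfl⟩ := exists_eq_of_load_pos (a := a) (i := i') (by omega)
  have hne : i ≠ a j := by rintro rfl; omega
  refine absurd (hN j i hne) (not_le.mpr ?_)
  calc f i (load a i + 1) < f i (q i) := hmono i hi
    _ = f (a j) (q (a j)) := by rw [hq, hq]
    _ ≤ cost f a j := (hmono _).monotone (by omega)

end Nash

section Regroup

variable [Fintype N] [DecidableEq N] [DecidableEq M]

def regroup (a : N → M) (x y z : M) (Sy Sz : Finset N) (j : N) : M :=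
  if j ∈ Sz then z else if j ∈ Sy then y else if a j = x ∨ a j = y ∨ a j = z then x else a j

variable {a : N → M} {x y z : M} {Sy Sz : Finset N}

lemma load_regroup_right (hxz : x ≠ z) (hyz : y ≠ z) :
    load (regroup a x y z Sy Sz) z = #Sz := by
  unfold load
  congr 1
  ext j
  rw [mem_filter]
  simp only [mem_univ, true_and, regroup]
  split_ifs <;> simp_all

lemma load_regroup_middle (hxy : x ≠ y) (hyz : y ≠ z) (hS : Disjoint Sy Sz) :
    load (regroup a x y z Sy Sz) y = #Sy := by
  unfold load
  congr 1
  ext j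
  rw [mem_filter]
  simp only [mem_univ, true_and, regroup]
  split_ifs <;> simp_all [disjoint_right, eq_comm]

lemma load_regroup_of_ne (hSy : ∀ j ∈ Sy, a j = x) (hSz : ∀ j ∈ Sz, a j = x) {i : M}
    (hx : i ≠ x) (hy : i ≠ y) (hz : i ≠ z) : load (regroup a x y z Sy Sz) i = load a i := by
  unfold load
  congr 1
  ext j
  rw [mem_filter]
  simp only [mem_univ, true_and, regroup]
  split_ifs <;> grind

lemma load_regroup_left (hxy : x ≠ y) (hxz : x ≠ z) (hyz : y ≠ z)
    (hSy : ∀ j ∈ Sy, a j = x) (hSz : ∀ j ∈ Sz, a j = x) (hS : Disjoint Sy Sz) :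
    load (regroup a x y z Sy Sz) x + #Sy + #Sz = load a x + load a y + load a z := by
  have hsum := card_filter_mem_eq_sum_load (regroup a x y z Sy Sz) {x, y, z}
  have hsame : univ.filter (fun j => regroup a x y z Sy Sz j ∈ ({x, y, z} : Finset M))
      = univ.filter fun j => a j ∈ ({x, y, z} : Finset M) := by
    ext j
    simp only [mem_filter, mem_univ, true_and, mem_insert, mem_singleton, regroup]
    split_ifs <;> grind
  rw [hsame, card_filter_mem_eq_sum_load, sum_insert (by simp [hxy, hxz]),
    sum_insert (by simp [hyz]), sum_insert (by simp [hxy, hxz]), sum_insert (by simp [hyz]),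
    sum_singleton, sum_singleton, load_regroup_middle hxy hyz hS,
    load_regroup_right hxz hyz] at hsum
  omega

end Regroup

theorem not_cStable_univ_of_regroup [Fintype N] [DecidableEq N] [DecidableEq M]
    {f : M → ℕ → ℕ} {a : N → M} {x y z : M} (hxy : x ≠ y) (hxz : x ≠ z) (hyz : y ≠ z)
    (hload : load a y + load a z + 2 ≤ load a x) (hfx : Monotone (f x))
    (hy : f y (load a y + 1) ≤ f x (load a x)) (hz : f z (load a z + 1) ≤ f x (load a x))
    (hy' : f x (load a x - 2) ≤ f y (load a y)) (hz' : f x (load a x - 2) < f z (load a z))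
    (hz0 : 0 < load a z) : ¬ cStable f a univ := by
  set X : Finset N := {j | a j = x}
  have hX : #X = load a x := rfl
  obtain ⟨Sz, hSzX, hSz⟩ := exists_subset_card_eq (s := X) (n := load a z + 1) (by omega)
  obtain ⟨Sy, hSyX, hSy⟩ := exists_subset_card_eq (s := X \ Sz) (n := load a y + 1) (by
    rw [card_sdiff_of_subset hSzX]; omega)
  have hSyx : ∀ j ∈ Sy, a j = x := fun j hj => (mem_filter.mp (sdiff_subset (hSyX hj))).2
  have hSzx : ∀ j ∈ Sz, a j = x := fun j hj => (mem_filter.mp (hSzX hj)).2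
  have hS : Disjoint Sy Sz := disjoint_of_subset_left hSyX sdiff_disjoint
  have hbx : load (regroup a x y z Sy Sz) x = load a x - 2 := by
    have := load_regroup_left hxy hxz hyz hSyx hSzx hS; omega
  have hby : load (regroup a x y z Sy Sz) y = load a y + 1 :=
    (load_regroup_middle hxy hyz hS).trans hSy
  have hbz : load (regroup a x y z Sy Sz) z = load a z + 1 :=
    (load_regroup_right hxz hyz).trans hSz
  have hbi := fun i => load_regroup_of_ne (y := y) (z := z) (i := i) hSyx hSzx
  set b := regroup a x y z Sy Sz
  have hcost : ∀ j, cost f b j ≤ cost f a j := by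
    intro j
    rw [cost, cost, show b j = regroup a x y z Sy Sz j from rfl, regroup]
    split_ifs with hjz hjy hj
    · rw [hbz, hSzx j hjz]; exact hz
    · rw [hby, hSyx j hjy]; exact hy
    · rw [hbx]
      rcases hj with h | h | h <;> rw [h]
      exacts [hfx (Nat.sub_le _ _), hy', hz'.le]
    · simp only [not_or] at hj
      rw [hbi _ hj.1 hj.2.1 hj.2.2]
  obtain ⟨j, hj⟩ := exists_eq_of_load_pos hz0
  have hbj : b j = x := by
    have hjz : j ∉ Sz := fun h => hxz (hSzx j h ▸ hj)
    have hjy : j ∉ Sy := fun h => hxz (hSyx j h ▸ hj)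
    simp [b, regroup, hjz, hjy, hj]
  have hstrict : cost f b j < cost f a j := by
    rw [cost, cost, hbj, hbx, hj]
    exact hz'
  exact fun hstable => hstable ⟨b, by simp, fun j _ => hcost j, j, mem_univ j, hstrict⟩

section Example2

lemma sum_fin2001_ite (c₀ cy cz : ℕ) :
    ∑ i : Fin 2001, (if (i : ℕ) = 0 then c₀ else if (i : ℕ) ≤ 1000 then cy else cz)
      = c₀ + 1000 * cy + 1000 * cz := by
  rw [Fin.sum_univ_eq_sum_range (fun n => if n = 0 then c₀ else if n ≤ 1000 then cy else cz),
    range_eq_Ico, ← sum_Ico_consecutive _ (by norm_num : 0 ≤ 1001) (by norm_num : 1001 ≤ 2001),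
    ← sum_Ico_consecutive _ (by norm_num : 0 ≤ 1) (by norm_num : 1 ≤ 1001),
    sum_const_nat (s := Ico 1 1001) (m := cy) fun n hn => by grind,
    sum_const_nat (s := Ico 1001 2001) (m := cz) fun n hn => by grind]
  simp

lemma le_sum_fin2001 {g : Fin 2001 → ℕ} {c₀ cy cz : ℕ} (h₀ : c₀ ≤ g 0)
    (hy : ∀ i : Fin 2001, 1 ≤ i.val → i.val ≤ 1000 → cy ≤ g i)
    (hz : ∀ i : Fin 2001, 1001 ≤ i.val → cz ≤ g i) :
    c₀ + 1000 * cy + 1000 * cz ≤ ∑ i, g i := by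
  rw [← sum_fin2001_ite]
  refine sum_le_sum fun i _ => ?_
  split_ifs with hi₀ hi
  · obtain rfl : i = 0 := Fin.ext hi₀
    exact h₀
  · exact hy i (by omega) hi
  · exact hz i (by omega)

lemma sum_fin2001_le {g : Fin 2001 → ℕ} {c₀ cy cz : ℕ} (h₀ : g 0 ≤ c₀)
    (hy : ∀ i : Fin 2001, 1 ≤ i.val → i.val ≤ 1000 → g i ≤ cy)
    (hz : ∀ i : Fin 2001, 1001 ≤ i.val → g i ≤ cz) :
    ∑ i, g i ≤ c₀ + 1000 * cy + 1000 * cz := by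
  rw [← sum_fin2001_ite]
  refine sum_le_sum fun i _ => ?_
  split_ifs with hi₀ hi
  · obtain rfl : i = 0 := Fin.ext hi₀
    exact h₀
  · exact hy i (by omega) hi
  · exact hz i (by omega)

variable {a : Fin 14052 → Fin 2001} {q : Fin 2001 → ℕ}

lemma exists_load_eq_seven (hqy : ∀ i : Fin 2001, 1 ≤ i.val → i.val ≤ 1000 → q i = 8)
    (hqz : ∀ i : Fin 2001, 1001 ≤ i.val → q i = 7) (hge : ∀ i, q i ≤ load a i + 1)
    (hx : load a 0 = 53) : ∃ i : Fin 2001, 1 ≤ i.val ∧ i.val ≤ 1000 ∧ load a i = 7 := by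
  by_contra! h
  have := le_sum_fin2001 (g := load a) (c₀ := 53) (cy := 8) (cz := 6) hx.ge
    (fun i h₁ h₂ => by have := hge i; have := h i h₁ h₂; rw [hqy i h₁ h₂] at *; omega)
    (fun i h₁ => by have := hge i; rw [hqz i h₁] at this; omega)
  simp [sum_load] at this

lemma exists_load_eq_six (hqy : ∀ i : Fin 2001, 1 ≤ i.val → i.val ≤ 1000 → q i = 8)
    (hqz : ∀ i : Fin 2001, 1001 ≤ i.val → q i = 7) (hge : ∀ i, q i ≤ load a i + 1)
    (hx : load a 0 = 53) : ∃ i : Fin 2001, 1001 ≤ i.val ∧ load a i = 6 := by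
  by_contra! h
  have := le_sum_fin2001 (g := load a) (c₀ := 53) (cy := 7) (cz := 7) hx.ge
    (fun i h₁ h₂ => by have := hge i; rw [hqy i h₁ h₂] at this; omega)
    (fun i h₁ => by have := hge i; have := h i h₁; rw [hqz i h₁] at *; omega)
  simp [sum_load] at this

end Example2

theorem example2_x_is_low_general
    (f : Fin 2001 → ℕ → ℕ) (hmono : ∀ i, StrictMono (f i))
    (q : Fin 2001 → ℕ)
    (hqx : q 0 = 53)
    (hqy : ∀ i : Fin 2001, 1 ≤ i.val → i.val ≤ 1000 → q i = 8)
    (hqz : ∀ i : Fin 2001, 1001 ≤ i.val → q i = 7)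
    (htype1 : ∀ i, f i (q i) = minmax (Fin 14052) f)
    (hbeta : ∀ i j : Fin 2001, 1 ≤ i.val → i.val ≤ 1000 → 1001 ≤ j.val →
      f i 7 < f 0 52 ∧ f j 6 < f i 7 ∧ f 0 51 < f j 6) :
    ∀ a : Fin 14052 → Fin 2001, Nash f a → cStable f a Finset.univ →
      load a 0 = 52 := by
  intro a hN hS
  have hle := hN.load_le hmono htype1 (by
    have := le_sum_fin2001 hqx.ge (fun i h₁ h₂ => (hqy i h₁ h₂).ge) (fun i h => (hqz i h).ge)
    simp only [Fintype.card_fin]; omega)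
  have hge := hN.le_load_add_one hmono htype1 (by
    have := sum_fin2001_le (g := fun i => q i - 1) (c₀ := 52) (cy := 7) (cz := 6)
      (by simp [hqx]) (fun i h₁ h₂ => by simp [hqy i h₁ h₂]) (fun i h => by simp [hqz i h])
    simp only [Fintype.card_fin]; omega)
  by_contra hx52
  have hx : load a 0 = 53 := by have := hle 0; have := hge 0; omega
  obtain ⟨y, hy₁, hy₂, hy⟩ := exists_load_eq_seven hqy hqz hge hx
  obtain ⟨z, hz, hz6⟩ := exists_load_eq_six hqy hqz hge hx
  obtain ⟨-, hzy, hxz⟩ := hbeta y z hy₁ hy₂ hz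
  have hα : ∀ i, f i (q i) = f 0 53 := fun i => (htype1 i).trans (hqx ▸ htype1 0).symm
  refine not_cStable_univ_of_regroup (x := 0) (y := y) (z := z) (by rintro rfl; simp at hy₁)
    (by rintro rfl; simp at hz) (by rintro rfl; omega) (by omega) (hmono 0).monotone ?_ ?_ ?_ ?_
    (by omega) hS
  · rw [hy, hx, ← hα y, hqy y hy₁ hy₂]
  · rw [hz6, hx, ← hα z, hqz z hz]
  · rw [hy, hx]; exact (hxz.trans hzy).le
  · rw [hz6, hx]; exact hxz

/-- In the RSG of Example 2 (14052 agents; resource `0` is `x` with quota 53, resources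
`1,…,1000` are the identical `y` resources with quota 8, resources `1001,…,2000` are the
identical `z` resources with quota 7; all of type 1; `β_x > β_y > β_z > f_x(q_x − 2)`),
every Nash equilibrium allocation that is stable for the grand coalition assigns exactly
`q_x − 1 = 52` agents to resource `x`. -/
theorem example2_x_is_low
    (f : Fin 2001 → ℕ → ℕ) (hmono : ∀ i, StrictMono (f i)) (hzero : ∀ i, f i 0 = 0)
    (hyy : ∀ i i' : Fin 2001, 1 ≤ i.val → i.val ≤ 1000 → 1 ≤ i'.val → i'.val ≤ 1000 →
      f i = f i')
    (hzz : ∀ i i' : Fin 2001, 1001 ≤ i.val → 1001 ≤ i'.val → f i = f i')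
    (q : Fin 2001 → ℕ) (hq : ∀ i, q i = quota f (minmax (Fin 14052) f) i)
    (hqx : q 0 = 53)
    (hqy : ∀ i : Fin 2001, 1 ≤ i.val → i.val ≤ 1000 → q i = 8)
    (hqz : ∀ i : Fin 2001, 1001 ≤ i.val → q i = 7)
    (htype1 : ∀ i, f i (q i) = minmax (Fin 14052) f)
    (hbeta : ∀ i j : Fin 2001, 1 ≤ i.val → i.val ≤ 1000 → 1001 ≤ j.val →
      f i 7 < f 0 52 ∧ f j 6 < f i 7 ∧ f 0 51 < f j 6) :
    ∀ a : Fin 14052 → Fin 2001, Nash f a → cStable f a Finset.univ →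
      load a 0 = 52 :=
  example2_x_is_low_general f hmono q hqx hqy hqz htype1 hbeta
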